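/- Let G be a finite simple graph whose oriented edges are labeled by elements of a group Γ, with nonnegative edge weights x, such that every inconsistent cycle of G has total weight at least 1, and suppose 0 ≤ x_e < δ ≤ 1 for every edge e of G. Then every inconsistent cycle C in G contains a pair of vertices u, v on C satisfying d_x(u, v) > (1 − δ)/2. -/
import Mathlib


open SimpleGraph

/-- The weight of a walk: the sum of the weights of its edges, counted with multiplicity. -/
def walkWeight {V : Type*} {G : SimpleGraph V} (x : Sym2 V → ℝ) {u v : V}
    (p : G.Walk u v) : ℝ :=
  (p.edges.map x).sum

/-- The shortest-path distance between `u` and `v` induced by the edge weights `x`. -/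
noncomputable def wdist {V : Type*} (G : SimpleGraph V) (x : Sym2 V → ℝ) (u v : V) : ℝ :=
  sInf {r | ∃ p : G.Walk u v, walkWeight x p = r}

/-- The label of a walk `(v_0, v_1, …, v_l)`:
the product `g_{v_{l-1} v_l} ⋯ g_{v_1 v_2} · g_{v_0 v_1}`. -/
def walkLabel {V : Type*} {Γ : Type*} [Group Γ] {G : SimpleGraph V} (g : V → V → Γ)
    {u v : V} (p : G.Walk u v) : Γ :=
  ((p.darts.map (fun d => g d.fst d.snd)).reverse).prod

section Aux

variable {V : Type*} {Γ : Type*} [Group Γ] {G : SimpleGraph V}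

lemma walkWeight_nil' (x : Sym2 V → ℝ) (u : V) :
    walkWeight x (Walk.nil : G.Walk u u) = 0 := rfl

lemma walkWeight_cons' (x : Sym2 V → ℝ) {u v w : V} (h : G.Adj u v) (p : G.Walk v w) :
    walkWeight x (Walk.cons h p) = x s(u, v) + walkWeight x p := by
  simp [walkWeight]

lemma walkWeight_append' (x : Sym2 V → ℝ) {u v w : V} (p : G.Walk u v) (q : G.Walk v w) :
    walkWeight x (p.append q) = walkWeight x p + walkWeight x q := by
  simp [walkWeight, Walk.edges_append]

lemma walkWeight_reverse' (x : Sym2 V → ℝ) {u v : V} (p : G.Walk u v) :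
    walkWeight x p.reverse = walkWeight x p := by
  simp [walkWeight, Walk.edges_reverse, List.sum_reverse]

lemma walkWeight_nonneg' (x : Sym2 V → ℝ) (hx0 : ∀ e ∈ G.edgeSet, 0 ≤ x e)
    {u v : V} (p : G.Walk u v) : 0 ≤ walkWeight x p := by
  apply List.sum_nonneg
  intro r hr
  obtain ⟨e, he, rfl⟩ := List.mem_map.mp hr
  exact hx0 e (Walk.edges_subset_edgeSet p he)

lemma walkLabel_nil' (g : V → V → Γ) (u : V) :
    walkLabel g (Walk.nil : G.Walk u u) = 1 := rfl

lemma walkLabel_cons' (g : V → V → Γ) {u v w : V} (h : G.Adj u v) (p : G.Walk v w) :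
    walkLabel g (Walk.cons h p) = walkLabel g p * g u v := by
  simp [walkLabel]

lemma walkLabel_append' (g : V → V → Γ) {u v w : V} (p : G.Walk u v) (q : G.Walk v w) :
    walkLabel g (p.append q) = walkLabel g q * walkLabel g p := by
  simp [walkLabel, Walk.darts_append]

lemma walkLabel_reverse' (g : V → V → Γ) (hg : ∀ u v, G.Adj u v → g v u = (g u v)⁻¹)
    {u v : V} (p : G.Walk u v) :
    walkLabel g p.reverse = (walkLabel g p)⁻¹ := by
  induction p with
  | nil => simp [walkLabel]
  | cons h p ih =>
    rename_i a b c
    rw [Walk.reverse_cons, walkLabel_append', ih, walkLabel_cons', walkLabel_cons',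
      walkLabel_nil', one_mul, hg a b h, mul_inv_rev]

/-- A path of length at least 2 from `a` to `b` does not use the edge `s(b,a)`. -/
lemma not_closing_edge {a b : V} (p : G.Walk a b) (hp : p.IsPath) (hl : 2 ≤ p.length) :
    s(b, a) ∉ p.edges := by
  intro he
  cases p with
  | nil => simp at hl
  | cons h q =>
    rename_i c
    rw [Walk.edges_cons, List.mem_cons] at he
    rw [Walk.cons_isPath_iff] at hp
    rcases he with he | he
    · rw [Sym2.eq_iff] at he
      rcases he with ⟨h1, h2⟩ | ⟨h1, h2⟩
      · exact G.irrefl (h2 ▸ h)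
      · subst h1
        have hq : q = Walk.nil := by
          have := SimpleGraph.Path.loop_eq ⟨q, hp.1⟩
          exact congrArg Subtype.val this
        subst hq
        simp [Walk.length_cons] at hl
    · exact hp.2 (Walk.snd_mem_support_of_mem_edges q he)

/-- Every inconsistent closed walk has weight at least 1, provided every inconsistent
cycle does. -/
lemma closed_ge_one (g : V → V → Γ) (hg : ∀ u v, G.Adj u v → g v u = (g u v)⁻¹)
    (x : Sym2 V → ℝ) (hx0 : ∀ e ∈ G.edgeSet, 0 ≤ x e)
    (hincons : ∀ (v : V) (C : G.Walk v v), C.IsCycle → walkLabel g C ≠ 1 →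
      1 ≤ walkWeight x C) :
    ∀ (n : ℕ) (w : V) (D : G.Walk w w), D.length ≤ n → walkLabel g D ≠ 1 →
      1 ≤ walkWeight x D := by
  classical
  intro n
  induction n with
  | zero =>
    intro w D hlen hne
    cases D with
    | nil => exact absurd (walkLabel_nil' g w) hne
    | cons h T => simp [Walk.length_cons] at hlen
  | succ n ih =>
    intro w D hlen hne
    cases D with
    | nil => exact absurd (walkLabel_nil' g w) hne
    | cons h T =>
      rename_i y
      by_cases hnd : T.support.Nodup
      · -- the walk is (close to) a cycle
        cases T with
        | nil => exact absurd h G.irrefl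
        | cons h2 T2 =>
          rename_i c
          cases T2 with
          | nil =>
            -- a two-step backtracking walk has trivial label
            exfalso
            apply hne
            rw [walkLabel_cons', walkLabel_cons', walkLabel_nil', one_mul, hg w y h,
              inv_mul_cancel]
          | cons h3 T3 =>
            have hpath : (Walk.cons h2 (Walk.cons h3 T3)).IsPath :=
              (Walk.isPath_def _).mpr hnd
            have hne2 : s(w, y) ∉ (Walk.cons h2 (Walk.cons h3 T3)).edges :=
              not_closing_edge _ hpath (by rw [Walk.length_cons, Walk.length_cons]; omega)
            have hcyc : (Walk.cons h (Walk.cons h2 (Walk.cons h3 T3))).IsCycle :=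
              SimpleGraph.Path.cons_isCycle ⟨_, hpath⟩ h hne2
            exact hincons w _ hcyc hne
      · -- there is a repeated vertex; split off a strictly shorter closed walk
        rw [List.nodup_iff_count_le_one] at hnd
        push_neg at hnd
        obtain ⟨z, hz⟩ := hnd
        have hz2 : 2 ≤ T.support.count z := hz
        have hzmem : z ∈ T.support := by
          rw [← List.count_pos_iff]
          omega
        obtain ⟨T1, T2, hTspec, hz2'⟩ :
            ∃ (T1 : G.Walk y z) (T2 : G.Walk z w), T1.append T2 = T ∧ z ∈ T2.support.tail := by
          refine ⟨T.takeUntil z hzmem, T.dropUntil z hzmem, T.take_spec hzmem, ?_⟩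
          have hsupp : T.support =
              (T.takeUntil z hzmem).support ++ (T.dropUntil z hzmem).support.tail := by
            conv_lhs => rw [← T.take_spec hzmem]
            exact Walk.support_append _ _
          have h1 : (T.takeUntil z hzmem).support.count z = 1 :=
            T.count_support_takeUntil_eq_one hzmem
          rw [← List.count_pos_iff]
          rw [hsupp, List.count_append, h1] at hz2
          omega
        cases T2 with
        | nil => simp at hz2'
        | cons h3 R =>
          rename_i c
          have hzR : z ∈ R.support := by simpa using hz2'
          obtain ⟨R1, R2, hRspec⟩ : ∃ (R1 : G.Walk c z) (R2 : G.Walk z w),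
              R1.append R2 = R := ⟨R.takeUntil z hzR, R.dropUntil z hzR, R.take_spec hzR⟩
          have hD : Walk.cons h T = (Walk.cons h T1).append ((Walk.cons h3 R1).append R2) := by
            rw [← hTspec, ← hRspec]
            simp [Walk.cons_append, Walk.append_assoc]
          have hwX : 0 ≤ walkWeight x (Walk.cons h T1) := walkWeight_nonneg' x hx0 _
          have hwY : 0 ≤ walkWeight x R2 := walkWeight_nonneg' x hx0 _
          have hwM : 0 ≤ walkWeight x (Walk.cons h3 R1) := walkWeight_nonneg' x hx0 _
          have hwD : walkWeight x (Walk.cons h T) = walkWeight x (Walk.cons h T1) +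
              (walkWeight x (Walk.cons h3 R1) + walkWeight x R2) := by
            rw [hD, walkWeight_append', walkWeight_append']
          have hlD : (Walk.cons h T).length =
              (Walk.cons h T1).length + ((Walk.cons h3 R1).length + R2.length) := by
            rw [hD, Walk.length_append, Walk.length_append]
          have e1 : (Walk.cons h3 R1).length = R1.length + 1 := Walk.length_cons _ _
          have e2 : (Walk.cons h T1).length = T1.length + 1 := Walk.length_cons _ _
          have e3 : (Walk.cons h T).length = T.length + 1 := Walk.length_cons _ _
          by_cases hM : walkLabel g (Walk.cons h3 R1) = 1
          · have hlab : walkLabel g ((Walk.cons h T1).append R2) =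
                walkLabel g (Walk.cons h T) := by
              rw [hD, walkLabel_append', walkLabel_append', walkLabel_append', hM, mul_one]
            have h1 : 1 ≤ walkWeight x ((Walk.cons h T1).append R2) := by
              apply ih w _ ?_ (by rw [hlab]; exact hne)
              rw [Walk.length_append]
              omega
            rw [walkWeight_append'] at h1
            rw [hwD]
            linarith
          · have h1 : 1 ≤ walkWeight x (Walk.cons h3 R1) := by
              apply ih z _ ?_ hM
              omega
            rw [hwD]
            linarith

end Aux

/-- If every inconsistent cycle of a group-labeled graph has total weight at least 1 and
`0 ≤ x_e < δ ≤ 1` for every edge, then every inconsistent cycle contains a pair of vertices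
at distance greater than `(1 - δ)/2`. -/
theorem stmt6 {V : Type*} [Fintype V] {Γ : Type*} [Group Γ] (G : SimpleGraph V)
    (g : V → V → Γ) (hg : ∀ u v, G.Adj u v → g v u = (g u v)⁻¹)
    (x : Sym2 V → ℝ) (δ : ℝ) (hδ : δ ≤ 1)
    (hx : ∀ e ∈ G.edgeSet, 0 ≤ x e ∧ x e < δ)
    (hincons : ∀ (v : V) (C : G.Walk v v), C.IsCycle → walkLabel g C ≠ 1 →
      1 ≤ walkWeight x C)
    (v : V) (C : G.Walk v v) (hC : C.IsCycle) (hCincons : walkLabel g C ≠ 1) :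
    ∃ a ∈ C.support, ∃ b ∈ C.support, (1 - δ) / 2 < wdist G x a b := by
  classical
  by_contra hcon
  push_neg at hcon
  have hx0 : ∀ e ∈ G.edgeSet, 0 ≤ x e := fun e he => (hx e he).1
  have A1 : ∀ (w : V) (D : G.Walk w w), walkLabel g D ≠ 1 → 1 ≤ walkWeight x D :=
    fun w D hne => closed_ge_one g hg x hx0 hincons D.length w D le_rfl hne
  -- C has an edge
  have hlen3 := hC.three_le_length
  have hCeNe : C.edges ≠ [] := by
    intro hnil
    have := Walk.length_edges C
    rw [hnil] at this
    simp at this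
    omega
  obtain ⟨e0, he0⟩ := List.exists_mem_of_ne_nil _ hCeNe
  have he0' : e0 ∈ G.edgeSet := Walk.edges_subset_edgeSet C he0
  -- the slack γ
  have hEfin : G.edgeSet.Finite := Set.toFinite _
  have hEne : hEfin.toFinset.Nonempty := ⟨e0, by rwa [Set.Finite.mem_toFinset]⟩
  set γ := hEfin.toFinset.inf' hEne (fun e => δ - x e) with hγdef
  have hγpos : 0 < γ := by
    rw [hγdef, Finset.lt_inf'_iff]
    intro e he
    rw [Set.Finite.mem_toFinset] at he
    linarith [(hx e he).2]
  have hγle : ∀ e ∈ G.edgeSet, x e ≤ δ - γ := by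
    intro e he
    have h1 : γ ≤ δ - x e := by
      rw [hγdef]
      exact Finset.inf'_le _ (by rwa [Set.Finite.mem_toFinset])
    linarith
  have hγδ : γ ≤ δ := by
    have h1 := hγle e0 he0'
    have h2 := (hx e0 he0').1
    linarith
  have hδ0 : 0 < δ := lt_of_le_of_lt (hx e0 he0').1 (hx e0 he0').2
  set β := (1 - δ) / 2 + γ / 4 with hβdef
  have hβpos : 0 < β := by rw [hβdef]; linarith
  have hβ1 : β < 1 := by rw [hβdef]; linarith
  -- base case: a full relabeling of C gives a light inconsistent closed walk
  have base : ∀ (A : G.Walk v v), C = A.append Walk.nil →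
      ∀ P : G.Walk v v, walkLabel g P = walkLabel g A → walkWeight x P < β → False := by
    intro A hCA P hlab hw
    rw [Walk.append_nil] at hCA
    subst hCA
    have h1 : 1 ≤ walkWeight x P := A1 v P (by rw [hlab]; exact hCincons)
    linarith
  -- main induction along the cycle
  have key : ∀ (n : ℕ) (u : V) (B : G.Walk u v) (A : G.Walk v u),
      B.length ≤ n → C = A.append B →
      ∀ P : G.Walk v u, walkLabel g P = walkLabel g A → walkWeight x P < β → False := by
    intro n
    induction n with
    | zero =>
      intro u B A hBl hCA P hlab hw
      cases B with
      | nil => exact base A hCA P hlab hw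
      | cons hB B' => simp [Walk.length_cons] at hBl
    | succ n ih =>
      intro u B A hBl hCA P hlab hw
      cases B with
      | nil => exact base A hCA P hlab hw
      | cons hB B' =>
        rename_i y
        have hCA2 : C = (A.append (Walk.cons hB Walk.nil)).append B' := by
          rw [hCA]
          exact Walk.append_assoc A (Walk.cons hB Walk.nil) B'
        have hy : y ∈ C.support := by
          rw [hCA]
          refine (Walk.mem_support_append_iff _ _).mpr (Or.inr ?_)
          simp [Walk.support_cons, Walk.start_mem_support]
        have hdist : wdist G x v y ≤ (1 - δ) / 2 := hcon v C.start_mem_support y hy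
        have hSne : ({r | ∃ p : G.Walk v y, walkWeight x p = r}).Nonempty :=
          ⟨_, A.append (Walk.cons hB Walk.nil), rfl⟩
        have hSbb : BddBelow {r | ∃ p : G.Walk v y, walkWeight x p = r} := by
          refine ⟨0, ?_⟩
          rintro r ⟨p, rfl⟩
          exact walkWeight_nonneg' x hx0 p
        have hlt : sInf {r | ∃ p : G.Walk v y, walkWeight x p = r} < β := by
          have h2 : wdist G x v y < β := lt_of_le_of_lt hdist (by rw [hβdef]; linarith)
          exact h2
        obtain ⟨r, hrS, hrβ⟩ := (csInf_lt_iff hSbb hSne).mp hlt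
        obtain ⟨Q, rfl⟩ := hrS
        have hedge : s(u, y) ∈ G.edgeSet := hB
        have hxe : x s(u, y) ≤ δ - γ := hγle _ hedge
        -- the closed walk P + edge + Q.reverse is light, hence consistent
        have hZw : walkWeight x (P.append ((Walk.cons hB Walk.nil).append Q.reverse)) < 1 := by
          rw [walkWeight_append', walkWeight_append', walkWeight_reverse', walkWeight_cons',
            walkWeight_nil']
          rw [hβdef] at hw hrβ
          linarith
        have hZlab : walkLabel g (P.append ((Walk.cons hB Walk.nil).append Q.reverse)) = 1 := by
          by_contra hzn
          have := A1 v _ hzn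
          linarith
        have h2 : walkLabel g (P.append ((Walk.cons hB Walk.nil).append Q.reverse)) =
            (walkLabel g Q)⁻¹ * g u y * walkLabel g P := by
          rw [walkLabel_append', walkLabel_append', walkLabel_reverse' g hg, walkLabel_cons',
            walkLabel_nil', one_mul]
        have h3 : walkLabel g Q = g u y * walkLabel g P := by
          rw [h2] at hZlab
          rw [mul_assoc] at hZlab
          exact inv_mul_eq_one.mp hZlab
        have hQlab : walkLabel g Q = walkLabel g (A.append (Walk.cons hB Walk.nil)) := by
          rw [h3, hlab, walkLabel_append', walkLabel_cons', walkLabel_nil', one_mul]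
        refine ih y B' (A.append (Walk.cons hB Walk.nil)) ?_ hCA2 Q hQlab hrβ
        rw [Walk.length_cons] at hBl
        omega
  exact key C.length v C Walk.nil le_rfl (Walk.nil_append C).symm Walk.nil rfl
    (by rw [walkWeight_nil']; exact hβpos)
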